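/- Fix an integer d ≥ 1 and a real s > d, and let U^d = [0,1]^d. There is a constant C > 0, depending only on s and d, such that for every γ ∈ (0,1), every positive integer m, and every positive integer N, one has ℰ_s(U^d, m^d N)/(m^d N)^{1+s/d} ≤ γ^{−s} · ℰ_s(U^d, N)/N^{1+s/d} + C (1−γ)^{−s} N^{1−s/d}. -/

import Mathlib

/-!
Placing a copy of an `N`-point configuration `ω ⊆ [0,1]^d`, shrunk by `γ / m`, in the centre of
each of the `m ^ d` subcubes of side `1 / m` gives `m ^ d * N` points of `[0,1]^d`. The interactions
inside one copy add up to `(γ / m) ^ (-s) * E_s(ω)`. Two points in the cells `j ≠ k` are at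
distance at least `(1 - γ) / m * max |k i - j i| 1` for every coordinate `i`; comparing the
distance with the geometric mean of these `d` bounds dominates the cross interactions by a product
of one-dimensional lattice sums `∑ z : ℤ, max |z| 1 ^ (-s / d)`, which converge because `s > d`.
-/

open scoped ENNReal NNReal BigOperators Classical
open MeasureTheory Filter Metric Set Topology

/-- The Riesz `s`-energy of a finite configuration `ω`, valued in `[0,∞]`. -/
noncomputable def rieszEnergy {E : Type*} [PseudoEMetricSpace E] (s : ℝ) (ω : Finset E) : ℝ≥0∞ :=
  ∑ x ∈ ω, ∑ y ∈ ω, if x = y then 0 else edist x y ^ (-s)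

/-- The `N`-point minimal Riesz `s`-energy over a set `A` (infimum over all `N`-point
subsets of `A`; `∞` if there is none). -/
noncomputable def minRieszEnergy {E : Type*} [PseudoEMetricSpace E] (s : ℝ) (A : Set E)
    (N : ℕ) : ℝ≥0∞ :=
  ⨅ (ω : Finset E) (_ : ↑ω ⊆ A) (_ : ω.card = N), rieszEnergy s ω

/-- The unit cube `[0,1]^d` in `ℝ^d`. -/
def unitCube (d : ℕ) : Set (EuclideanSpace ℝ (Fin d)) := {x | ∀ i, x i ∈ Set.Icc (0 : ℝ) 1}

open Finset

section Energy

variable {E : Type*} [PseudoEMetricSpace E] {s : ℝ}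

theorem rieszEnergy_image {α : Type*} [DecidableEq α] [DecidableEq E] (ω : Finset α) {f : α → E}
    (hf : Set.InjOn f ω) :
    rieszEnergy s (ω.image f) =
      ∑ x ∈ ω, ∑ y ∈ ω, if x = y then 0 else edist (f x) (f y) ^ (-s) := by
  unfold rieszEnergy
  rw [sum_image hf]
  refine sum_congr rfl fun x hx => ?_
  rw [sum_image hf]
  refine sum_congr rfl fun y hy => ?_
  simp only [hf.eq_iff hx hy]

theorem minRieszEnergy_le {A : Set E} {ω : Finset E} (hω : ↑ω ⊆ A) :
    minRieszEnergy s A ω.card ≤ rieszEnergy s ω :=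
  iInf₂_le_of_le ω hω (iInf_le _ rfl)

theorem minRieszEnergy_le_of_forall {A : Set E} {M N : ℕ} {a b : ℝ≥0∞} (ha0 : a ≠ 0)
    (ha : a ≠ ⊤)
    (h : ∀ ω : Finset E, ↑ω ⊆ A → ω.card = N → minRieszEnergy s A M ≤ a * rieszEnergy s ω + b) :
    minRieszEnergy s A M ≤ a * minRieszEnergy s A N + b := by
  conv_rhs => simp only [minRieszEnergy, ENNReal.mul_iInf_of_ne ha0 ha, ENNReal.iInf_add]
  exact le_iInf fun ω => le_iInf fun hω => le_iInf fun hN => h ω hω hN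

theorem rieszEnergy_image_prod_le {ι : Type*} [Fintype ι] [DecidableEq ι] [DecidableEq E]
    {ω : Finset E} {T : ι → E → E}
    (hT : Set.InjOn (fun p : ι × E => T p.1 p.2) ↑(Finset.univ ×ˢ ω : Finset (ι × E)))
    {a : ℝ≥0∞} {b : ι → ι → ℝ≥0∞}
    (hdiag : ∀ i, ∀ x ∈ ω, ∀ y ∈ ω, x ≠ y → edist (T i x) (T i y) ^ (-s) ≤ a * edist x y ^ (-s))
    (hoff : ∀ i j, i ≠ j → ∀ x ∈ ω, ∀ y ∈ ω, edist (T i x) (T j y) ^ (-s) ≤ b i j) :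
    rieszEnergy s ((Finset.univ ×ˢ ω).image fun p => T p.1 p.2) ≤
      ∑ i, (a * rieszEnergy s ω + ∑ j ∈ univ.erase i, (ω.card : ℝ≥0∞) ^ 2 * b i j) := by
  rw [rieszEnergy_image _ hT, sum_product]
  refine sum_le_sum fun i _ => ?_
  simp_rw [sum_product]
  rw [sum_comm, ← add_sum_erase _ _ (mem_univ i)]
  gcongr with j hj
  · rw [rieszEnergy, mul_sum]
    refine sum_le_sum fun x hx => ?_
    rw [mul_sum]
    refine sum_le_sum fun y hy => ?_
    by_cases hxy : x = y
    · simp [hxy]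
    · simpa [hxy] using hdiag i x hx y hy hxy
  · have hij : i ≠ j := (ne_of_mem_erase hj).symm
    calc _ ≤ ∑ _x ∈ ω, ∑ _y ∈ ω, b i j := by
          refine sum_le_sum fun x hx => sum_le_sum fun y hy => ?_
          simpa [hij] using hoff i j hij x hx y hy
      _ = _ := by simp [sq, mul_assoc]

end Energy

noncomputable def latticeWeight (p : ℝ) (z : ℤ) : ℝ := max |(z : ℝ)| 1 ^ (-p)

section LatticeWeight

variable {p : ℝ}

theorem latticeWeight_nonneg (z : ℤ) : 0 ≤ latticeWeight p z :=
  Real.rpow_nonneg (le_max_of_le_right zero_le_one) _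

theorem latticeWeight_zero : latticeWeight p 0 = 1 := by
  simp [latticeWeight]

theorem summable_latticeWeight (hp : 1 < p) : Summable (latticeWeight p) := by
  refine (Real.summable_abs_int_rpow hp).of_norm_bounded_eventually ?_
  filter_upwards [Filter.eventually_cofinite_ne 0] with z hz
  have hz1 : (1 : ℝ) ≤ |(z : ℝ)| := by exact_mod_cast Int.one_le_abs hz
  rw [Real.norm_of_nonneg (latticeWeight_nonneg z), latticeWeight, max_eq_left hz1]

theorem one_le_tsum_latticeWeight (hp : 1 < p) : 1 ≤ ∑' z, latticeWeight p z :=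
  latticeWeight_zero (p := p) ▸
    (summable_latticeWeight hp).le_tsum 0 fun z _ => latticeWeight_nonneg z

theorem sum_latticeWeight_sub_le (hp : 1 < p) (m : ℕ) (c : ℤ) :
    ∑ a : Fin m, latticeWeight p (a - c) ≤ ∑' z, latticeWeight p z := by
  have hinj : Set.InjOn (fun a : Fin m => (a : ℤ) - c) ↑(univ : Finset (Fin m)) :=
    fun a _ b _ h => Fin.ext (by simpa using h)
  rw [← sum_image (f := latticeWeight p) hinj]
  exact (summable_latticeWeight hp).sum_le_tsum _ fun z _ => latticeWeight_nonneg z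

theorem sum_prod_latticeWeight_sub_le (hp : 1 < p) {d m : ℕ} (c : Fin d → ℤ) :
    ∑ k : Fin d → Fin m, ∏ i, latticeWeight p (k i - c i) ≤ (∑' z, latticeWeight p z) ^ d := by
  rw [← Fintype.prod_sum (fun i (a : Fin m) => latticeWeight p (a - c i))]
  calc _ ≤ ∏ _i : Fin d, ∑' z, latticeWeight p z :=
        prod_le_prod (fun i _ => sum_nonneg fun a _ => latticeWeight_nonneg _)
          fun i _ => sum_latticeWeight_sub_le hp m (c i)
    _ = _ := by simp

end LatticeWeight

theorem rpow_neg_le_mul_prod_rpow {ι : Type*} [Fintype ι] [Nonempty ι] {s c D : ℝ} (hs : 0 ≤ s)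
    (hc : 0 < c) {b : ι → ℝ} (hb : ∀ i, 0 < b i) (hD : ∀ i, c * b i ≤ D) :
    D ^ (-s) ≤ c ^ (-s) * ∏ i, b i ^ (-(s / Fintype.card ι)) := by
  have hpow : ∀ r : ℝ, 0 ≤ r → r ^ (-s) = ∏ _i : ι, r ^ (-(s / Fintype.card ι)) := fun r hr => by
    rw [prod_const, card_univ, ← Real.rpow_natCast, ← Real.rpow_mul hr]
    field_simp
  have hcb : ∀ i, 0 < c * b i := fun i => mul_pos hc (hb i)
  have hD0 : 0 ≤ D := (hcb (Classical.arbitrary ι)).le.trans (hD _)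
  have hexp : -(s / Fintype.card ι) ≤ 0 := neg_nonpos.2 (by positivity)
  calc D ^ (-s) = ∏ _i : ι, D ^ (-(s / Fintype.card ι)) := hpow D hD0
    _ ≤ ∏ i, (c * b i) ^ (-(s / Fintype.card ι)) :=
        prod_le_prod (fun _ _ => Real.rpow_nonneg hD0 _)
          fun i _ => Real.rpow_le_rpow_of_nonpos (hcb i) (hD i) hexp
    _ = c ^ (-s) * ∏ i, b i ^ (-(s / Fintype.card ι)) := by
        simp_rw [Real.mul_rpow hc.le (hb _).le]
        rw [prod_mul_distrib, ← hpow c hc.le]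

theorem abs_apply_sub_le_dist {ι : Type*} [Fintype ι] (x y : EuclideanSpace ℝ ι) (i : ι) :
    |x i - y i| ≤ dist x y := by
  simpa [dist_eq_norm] using PiLp.norm_apply_le (x - y) i

theorem one_sub_mul_abs_sub_le {γ a b p q : ℝ} (hγ : 0 ≤ γ) (ha : a ∈ Icc (0 : ℝ) 1)
    (hb : b ∈ Icc (0 : ℝ) 1) (hpq : p = q ∨ 1 ≤ |p - q|) :
    (1 - γ) * |p - q| ≤ |p - q + γ * (a - b)| := by
  rcases hpq with rfl | hpq
  · simp only [sub_self, abs_zero, mul_zero, zero_add]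
    exact abs_nonneg _
  have hab : |γ * (a - b)| ≤ γ * |p - q| := by
    rw [abs_mul, abs_of_nonneg hγ]
    exact mul_le_mul_of_nonneg_left ((abs_sub_le_iff.2 ⟨by linarith [ha.2, hb.1],
      by linarith [ha.1, hb.2]⟩).trans hpq) hγ
  have := abs_sub_abs_le_abs_sub (p - q) (-(γ * (a - b)))
  rw [abs_neg, sub_neg_eq_add] at this
  linarith

theorem natCast_eq_or_one_le_abs_sub (a b : ℕ) : (a : ℝ) = b ∨ 1 ≤ |(a : ℝ) - b| := by
  rcases eq_or_ne a b with h | h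
  · exact .inl (congrArg _ h)
  · right
    have : ((a : ℤ) - b : ℤ) ≠ 0 := sub_ne_zero.2 (by exact_mod_cast h)
    exact_mod_cast Int.one_le_abs this

/-- The image of `unitCube d` under `subcubeMap γ j` is the cube of side `γ / m` centred in the
`j`-th cell of the grid of `m ^ d` cubes of side `1 / m`. -/
noncomputable def subcubeMap {d m : ℕ} (γ : ℝ) (j : Fin d → Fin m) (x : EuclideanSpace ℝ (Fin d)) :
    EuclideanSpace ℝ (Fin d) :=
  (γ / m) • x + WithLp.toLp 2 fun i => ((j i : ℝ) + (1 - γ) / 2) / m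

section SubcubeMap

variable {d m : ℕ} {γ : ℝ}

theorem subcubeMap_apply (j : Fin d → Fin m) (x : EuclideanSpace ℝ (Fin d)) (i : Fin d) :
    subcubeMap γ j x i = ((j i : ℝ) + (1 - γ) / 2 + γ * x i) / m := by
  simp only [subcubeMap, PiLp.add_apply, PiLp.smul_apply, smul_eq_mul]
  ring

theorem subcubeMap_mem_unitCube (hγ0 : 0 ≤ γ) (hγ1 : γ ≤ 1) (hm : 0 < m) (j : Fin d → Fin m)
    {x : EuclideanSpace ℝ (Fin d)} (hx : x ∈ unitCube d) : subcubeMap γ j x ∈ unitCube d := by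
  intro i
  have hj : (j i : ℝ) + 1 ≤ m := by exact_mod_cast (j i).isLt
  have hm' : (0 : ℝ) < m := by exact_mod_cast hm
  rw [subcubeMap_apply, Set.mem_Icc, le_div_iff₀ hm', div_le_one hm']
  constructor <;> nlinarith [(hx i).1, (hx i).2]

theorem dist_subcubeMap_same (hγ : 0 ≤ γ) (j : Fin d → Fin m) (x y : EuclideanSpace ℝ (Fin d)) :
    dist (subcubeMap γ j x) (subcubeMap γ j y) = γ / m * dist x y := by
  rw [subcubeMap, subcubeMap, dist_add_right, dist_smul₀, Real.norm_of_nonneg (by positivity)]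

theorem mul_abs_sub_le_dist_subcubeMap (hγ : 0 ≤ γ) (hm : 0 < m) (j k : Fin d → Fin m)
    {x y : EuclideanSpace ℝ (Fin d)} (hx : x ∈ unitCube d) (hy : y ∈ unitCube d) (i : Fin d) :
    (1 - γ) / m * |(k i : ℝ) - j i| ≤ dist (subcubeMap γ j x) (subcubeMap γ k y) := by
  refine le_trans ?_ (abs_apply_sub_le_dist _ _ i)
  have hm' : (0 : ℝ) < m := by exact_mod_cast hm
  rw [subcubeMap_apply, subcubeMap_apply, div_sub_div_same, abs_div, abs_of_pos hm',
    div_mul_eq_mul_div, div_le_div_iff_of_pos_right hm', abs_sub_comm (k i : ℝ)]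
  refine (one_sub_mul_abs_sub_le hγ (hx i) (hy i)
    (natCast_eq_or_one_le_abs_sub (j i) (k i))).trans_eq (congrArg _ (by ring))

theorem mul_max_le_dist_subcubeMap (hγ0 : 0 ≤ γ) (hγ1 : γ ≤ 1) (hm : 0 < m)
    {j k : Fin d → Fin m} (hjk : j ≠ k) {x y : EuclideanSpace ℝ (Fin d)} (hx : x ∈ unitCube d)
    (hy : y ∈ unitCube d) (i : Fin d) :
    (1 - γ) / m * max |(k i : ℝ) - j i| 1 ≤ dist (subcubeMap γ j x) (subcubeMap γ k y) := by
  obtain ⟨i₀, hi₀⟩ := Function.ne_iff.1 hjk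
  have h₀ : 1 ≤ |(k i₀ : ℝ) - j i₀| :=
    (natCast_eq_or_one_le_abs_sub (k i₀) (j i₀)).resolve_left
      (by exact_mod_cast fun h => hi₀ (Fin.ext h).symm)
  have hc : 0 ≤ (1 - γ) / m := div_nonneg (sub_nonneg.2 hγ1) m.cast_nonneg
  rw [mul_max_of_nonneg _ _ hc]
  refine max_le (mul_abs_sub_le_dist_subcubeMap hγ0 hm j k hx hy i) ?_
  calc (1 - γ) / m * 1 ≤ (1 - γ) / m * |(k i₀ : ℝ) - j i₀| := mul_le_mul_of_nonneg_left h₀ hc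
    _ ≤ _ := mul_abs_sub_le_dist_subcubeMap hγ0 hm j k hx hy i₀

theorem injOn_subcubeMap (hγ0 : 0 < γ) (hγ1 : γ < 1) (hm : 0 < m) :
    Set.InjOn (fun p : (Fin d → Fin m) × EuclideanSpace ℝ (Fin d) => subcubeMap γ p.1 p.2)
      (Set.univ ×ˢ unitCube d) := by
  rintro ⟨j, x⟩ ⟨-, hx⟩ ⟨k, y⟩ ⟨-, hy⟩ (h : subcubeMap γ j x = subcubeMap γ k y)
  obtain rfl | hjk := eq_or_ne j k
  · have hxy := dist_subcubeMap_same hγ0.le j x y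
    rw [h, dist_self, eq_comm, mul_eq_zero, dist_eq_zero] at hxy
    exact Prod.ext rfl (hxy.resolve_left (by positivity))
  · obtain ⟨i, -⟩ := Function.ne_iff.1 hjk
    have hpos : 0 < (1 - γ) / m * max |(k i : ℝ) - j i| 1 :=
      mul_pos (div_pos (sub_pos.2 hγ1) (by exact_mod_cast hm)) (lt_max_of_lt_right one_pos)
    have := mul_max_le_dist_subcubeMap hγ0.le hγ1.le hm hjk hx hy i
    rw [h, dist_self] at this
    exact absurd this (not_le.2 hpos)

theorem edist_subcubeMap_same_rpow (hγ : 0 < γ) (hm : 0 < m) (s : ℝ) (j : Fin d → Fin m)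
    (x y : EuclideanSpace ℝ (Fin d)) :
    edist (subcubeMap γ j x) (subcubeMap γ j y) ^ (-s) =
      ENNReal.ofReal ((γ / m) ^ (-s)) * edist x y ^ (-s) := by
  have hr : 0 < γ / m := by positivity
  rw [edist_dist, dist_subcubeMap_same hγ.le, ENNReal.ofReal_mul hr.le,
    ENNReal.mul_rpow_of_ne_top ENNReal.ofReal_ne_top ENNReal.ofReal_ne_top,
    ENNReal.ofReal_rpow_of_pos hr, edist_dist]

theorem edist_subcubeMap_rpow_le (hd : d ≠ 0) {s : ℝ} (hs : 0 ≤ s) (hγ0 : 0 ≤ γ) (hγ1 : γ < 1)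
    (hm : 0 < m) {j k : Fin d → Fin m} (hjk : j ≠ k) {x y : EuclideanSpace ℝ (Fin d)}
    (hx : x ∈ unitCube d) (hy : y ∈ unitCube d) :
    edist (subcubeMap γ j x) (subcubeMap γ k y) ^ (-s) ≤
      ENNReal.ofReal (((1 - γ) / m) ^ (-s) * ∏ i, latticeWeight (s / d) (k i - (j i : ℤ))) := by
  have : Nonempty (Fin d) := Fin.pos_iff_nonempty.1 (Nat.pos_of_ne_zero hd)
  have hc : 0 < (1 - γ) / m := div_pos (sub_pos.2 hγ1) (by exact_mod_cast hm)
  have hdist := mul_max_le_dist_subcubeMap hγ0 hγ1.le hm hjk hx hy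
  have hpos : 0 < dist (subcubeMap γ j x) (subcubeMap γ k y) :=
    (mul_pos hc (lt_max_of_lt_right one_pos)).trans_le (hdist (Classical.arbitrary _))
  rw [edist_dist, ENNReal.ofReal_rpow_of_pos hpos]
  refine ENNReal.ofReal_le_ofReal ((rpow_neg_le_mul_prod_rpow hs hc
    (fun _ => lt_max_of_lt_right one_pos) hdist).trans_eq ?_)
  simp [latticeWeight]

noncomputable def subcubeConfig (m : ℕ) (γ : ℝ) (ω : Finset (EuclideanSpace ℝ (Fin d))) :
    Finset (EuclideanSpace ℝ (Fin d)) :=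
  (Finset.univ ×ˢ ω).image fun p : (Fin d → Fin m) × _ => subcubeMap γ p.1 p.2

theorem injOn_subcubeConfig (hγ0 : 0 < γ) (hγ1 : γ < 1) (hm : 0 < m)
    {ω : Finset (EuclideanSpace ℝ (Fin d))} (hω : ↑ω ⊆ unitCube d) :
    Set.InjOn (fun p : (Fin d → Fin m) × _ => subcubeMap γ p.1 p.2)
      ((Finset.univ ×ˢ ω : Finset ((Fin d → Fin m) × _)) : Set (_ × _)) :=
  (injOn_subcubeMap hγ0 hγ1 hm).mono (by simpa using Set.prod_mono subset_rfl hω)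

theorem subcubeConfig_subset_unitCube (hγ0 : 0 ≤ γ) (hγ1 : γ ≤ 1) (hm : 0 < m)
    {ω : Finset (EuclideanSpace ℝ (Fin d))} (hω : ↑ω ⊆ unitCube d) :
    ↑(subcubeConfig m γ ω) ⊆ unitCube d := by
  rw [subcubeConfig, coe_image]
  rintro _ ⟨⟨j, x⟩, hx, rfl⟩
  exact subcubeMap_mem_unitCube hγ0 hγ1 hm j (hω (mem_product.1 hx).2)

theorem card_subcubeConfig (hγ0 : 0 < γ) (hγ1 : γ < 1) (hm : 0 < m)
    {ω : Finset (EuclideanSpace ℝ (Fin d))} (hω : ↑ω ⊆ unitCube d) :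
    (subcubeConfig m γ ω).card = m ^ d * ω.card := by
  simp [subcubeConfig, card_image_of_injOn (injOn_subcubeConfig hγ0 hγ1 hm hω)]

theorem rieszEnergy_subcubeConfig_le (hd : d ≠ 0) {s : ℝ} (hs : (d : ℝ) < s) (hγ0 : 0 < γ)
    (hγ1 : γ < 1) (hm : 0 < m) {ω : Finset (EuclideanSpace ℝ (Fin d))} (hω : ↑ω ⊆ unitCube d) :
    rieszEnergy s (subcubeConfig m γ ω) ≤
      (m : ℝ≥0∞) ^ d * (ENNReal.ofReal ((γ / m) ^ (-s)) * rieszEnergy s ω + (ω.card : ℝ≥0∞) ^ 2 *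
        ENNReal.ofReal (((1 - γ) / m) ^ (-s) * (∑' z, latticeWeight (s / d) z) ^ d)) := by
  have hs0 : 0 ≤ s := (Nat.cast_nonneg d).trans hs.le
  have hp : 1 < s / d := (one_lt_div (by positivity)).2 hs
  rw [subcubeConfig]
  have hpair := rieszEnergy_image_prod_le (s := s) (b := fun j k => ENNReal.ofReal
      (((1 - γ) / m) ^ (-s) * ∏ i, latticeWeight (s / d) (k i - (j i : ℤ))))
    (injOn_subcubeConfig hγ0 hγ1 hm hω)
    (fun j x _ y _ _ => (edist_subcubeMap_same_rpow hγ0 hm s j x y).le)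
    fun j k hjk x hx y hy => edist_subcubeMap_rpow_le hd hs0 hγ0.le hγ1 hm hjk (hω hx) (hω hy)
  calc _ ≤ _ := hpair
    _ ≤ ∑ _j : Fin d → Fin m, (ENNReal.ofReal ((γ / m) ^ (-s)) * rieszEnergy s ω +
          (ω.card : ℝ≥0∞) ^ 2 *
            ENNReal.ofReal (((1 - γ) / m) ^ (-s) * (∑' z, latticeWeight (s / d) z) ^ d)) := by
        gcongr with j
        rw [← mul_sum, ← ENNReal.ofReal_sum_of_nonneg fun k _ => mul_nonneg
          (Real.rpow_nonneg (div_nonneg (by linarith) m.cast_nonneg) _)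
          (prod_nonneg fun i _ => latticeWeight_nonneg _), ← mul_sum]
        gcongr
        exact (sum_le_sum_of_subset_of_nonneg (erase_subset _ _) fun k _ _ =>
          prod_nonneg fun i _ => latticeWeight_nonneg _).trans (sum_prod_latticeWeight_sub_le hp _)
    _ = _ := by
        rw [sum_const, card_univ, nsmul_eq_mul]
        simp

end SubcubeMap

theorem ofReal_pow_mul_div_rpow_neg {m : ℕ} {c : ℝ} (hm : 0 < m) (hc : 0 ≤ c) (d : ℕ) (s : ℝ) :
    (m : ℝ≥0∞) ^ d * ENNReal.ofReal ((c / m) ^ (-s)) =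
      ENNReal.ofReal (m ^ ((d : ℝ) + s)) * ENNReal.ofReal (c ^ (-s)) := by
  have hm' : (0 : ℝ) < m := by exact_mod_cast hm
  rw [← ENNReal.ofReal_natCast, ← ENNReal.ofReal_pow hm'.le, ← ENNReal.ofReal_mul (by positivity),
    ← ENNReal.ofReal_mul (by positivity), Real.div_rpow hc hm'.le, Real.rpow_neg hm'.le,
    div_inv_eq_mul, Real.rpow_add hm', Real.rpow_natCast]
  ring_nf

theorem natCast_pow_mul_rpow_one_add_div {d : ℕ} (hd : d ≠ 0) (m N : ℕ) (s : ℝ) :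
    ((m ^ d * N : ℕ) : ℝ) ^ (1 + s / d) = m ^ ((d : ℝ) + s) * N ^ (1 + s / d) := by
  rw [Nat.cast_mul, Nat.cast_pow, Real.mul_rpow (by positivity) N.cast_nonneg,
    ← Real.rpow_natCast, ← Real.rpow_mul m.cast_nonneg]
  congr 2
  field_simp

theorem minRieszEnergy_unitCube_pow_mul_le {d m : ℕ} {s γ : ℝ} (hd : d ≠ 0) (hs : (d : ℝ) < s)
    (hγ0 : 0 < γ) (hγ1 : γ < 1) (hm : 0 < m) (N : ℕ) :
    minRieszEnergy s (unitCube d) (m ^ d * N) ≤ ENNReal.ofReal (m ^ ((d : ℝ) + s)) *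
      (ENNReal.ofReal (γ ^ (-s)) * minRieszEnergy s (unitCube d) N +
        ENNReal.ofReal ((∑' z, latticeWeight (s / d) z) ^ d * (1 - γ) ^ (-s) * N ^ 2)) := by
  have hm' : (0 : ℝ) < m := by exact_mod_cast hm
  rw [mul_add, ← mul_assoc]
  refine minRieszEnergy_le_of_forall
    (mul_ne_zero (ENNReal.ofReal_pos.2 (by positivity)).ne'
      (ENNReal.ofReal_pos.2 (by positivity)).ne')
    (ENNReal.mul_ne_top ENNReal.ofReal_ne_top ENNReal.ofReal_ne_top) fun ω hω hN => ?_
  subst hN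
  calc _ ≤ rieszEnergy s (subcubeConfig m γ ω) :=
        card_subcubeConfig hγ0 hγ1 hm hω ▸
          minRieszEnergy_le (subcubeConfig_subset_unitCube hγ0.le hγ1.le hm hω)
    _ ≤ _ := rieszEnergy_subcubeConfig_le hd hs hγ0 hγ1 hm hω
    _ = _ := by
        have hdiag := ofReal_pow_mul_div_rpow_neg hm hγ0.le d s
        have hcross := ofReal_pow_mul_div_rpow_neg hm (sub_pos.2 hγ1).le d s
        have hc : 0 ≤ ((1 - γ) / m) ^ (-s) :=
          Real.rpow_nonneg (div_nonneg (sub_pos.2 hγ1).le m.cast_nonneg) _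
        have hK : 0 ≤ (∑' z, latticeWeight (s / d) z) ^ d :=
          pow_nonneg (tsum_nonneg latticeWeight_nonneg) d
        rw [mul_add, ← mul_assoc, hdiag, ENNReal.ofReal_mul hc, mul_left_comm,
          ← mul_assoc ((m : ℝ≥0∞) ^ d), hcross,
          ENNReal.ofReal_mul (mul_nonneg hK (Real.rpow_nonneg (sub_pos.2 hγ1).le _)),
          ENNReal.ofReal_mul hK, ENNReal.ofReal_pow (Nat.cast_nonneg _),
          ENNReal.ofReal_natCast]
        ring

/-- sub-multiplicative-type estimate for the normalized minimal `s`-energy of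
the unit cube: for all `γ ∈ (0,1)`, `m ≥ 1`, `N ≥ 1`,
`ℰ_s(U^d, m^d N)/(m^d N)^{1+s/d} ≤ γ^{-s} ℰ_s(U^d,N)/N^{1+s/d} + C(1-γ)^{-s} N^{1-s/d}`. -/
theorem minRieszEnergy_unitCube_subdivision (d : ℕ) (hd : 1 ≤ d) (s : ℝ)
    (hs : (d : ℝ) < s) :
    ∃ C : ℝ, 0 < C ∧ ∀ γ : ℝ, 0 < γ → γ < 1 → ∀ m N : ℕ, 0 < m → 0 < N →
      minRieszEnergy s (unitCube d) (m ^ d * N) /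
          ENNReal.ofReal (((m ^ d * N : ℕ) : ℝ) ^ (1 + s / (d : ℝ))) ≤
        ENNReal.ofReal (γ ^ (-s)) *
            (minRieszEnergy s (unitCube d) N / ENNReal.ofReal ((N : ℝ) ^ (1 + s / (d : ℝ)))) +
          ENNReal.ofReal (C * (1 - γ) ^ (-s) * (N : ℝ) ^ (1 - s / (d : ℝ))) := by
  have hd0 : (0 : ℝ) < d := by exact_mod_cast hd
  set C := (∑' z, latticeWeight (s / d) z) ^ d
  refine ⟨C, pow_pos (one_pos.trans_le (one_le_tsum_latticeWeight ((one_lt_div hd0).2 hs))) d,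
    fun γ hγ0 hγ1 m N hm hN => ?_⟩
  have hm' : (0 : ℝ) < m := by exact_mod_cast hm
  have hN' : (0 : ℝ) < N := by exact_mod_cast hN
  have hrate : C * (1 - γ) ^ (-s) * N ^ 2 / N ^ (1 + s / d) =
      C * (1 - γ) ^ (-s) * N ^ (1 - s / d) := by
    rw [mul_div_assoc, ← Real.rpow_natCast, ← Real.rpow_sub hN']
    congr 2
    push_cast
    ring
  rw [natCast_pow_mul_rpow_one_add_div (by omega) m N s, ENNReal.ofReal_mul (by positivity)]
  calc _ ≤ ENNReal.ofReal (m ^ ((d : ℝ) + s)) * (ENNReal.ofReal (γ ^ (-s)) *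
          minRieszEnergy s (unitCube d) N + ENNReal.ofReal (C * (1 - γ) ^ (-s) * N ^ 2)) /
        (ENNReal.ofReal (m ^ ((d : ℝ) + s)) * ENNReal.ofReal (N ^ (1 + s / d))) := by
        gcongr
        exact minRieszEnergy_unitCube_pow_mul_le (by omega) hs hγ0 hγ1 hm N
    _ = _ := by
        rw [ENNReal.mul_div_mul_left _ _ (by positivity) ENNReal.ofReal_ne_top, ENNReal.add_div,
          mul_div_assoc, ← ENNReal.ofReal_div_of_pos (by positivity), hrate]
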